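/- arXiv:2512.03367 — 4 statements merged into one kernel-verified Lean document; each statement's English description precedes it below -/
import Mathlib

section
/- For 0 ≤ r ≤ min(m,n), the number of rank r linear maps from F_q^m to F_q^n equals [m choose r]_q · [n choose r]_q · ∏_{i=0}^{r-1}(q^r − q^i), where [m choose r]_q denotes the Gaussian binomial coefficient. -/
/-!
Grouping the rank `r` maps `V → W` by their image `U`, each fibre is the set of surjections
`V → U`; by duality these are as many as the injections `U* → V*`, that is, the linearly
independent `r`-tuples in `V*`, so every fibre has `∏_{i<r} (q^dim V - q^i)` elements.
Applied to `V = F^r`, where the rank `r` maps are the injective ones, the same count gives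
`#{U : dim U = r} · ∏_{i<r} (q^r - q^i) = ∏_{i<r} (q^dim W - q^i)`, so the division defining
`qBinom` is exact and `qBinom` counts the `r`-dimensional subspaces.
-/

/-- The Gaussian binomial coefficient `[m choose r]_q`. -/
def qBinom (q m r : ℕ) : ℕ :=
  (∏ i ∈ Finset.range r, (q ^ m - q ^ i)) / (∏ i ∈ Finset.range r, (q ^ r - q ^ i))

open Function LinearMap
open Module (Basis Dual finrank finBasis)

theorem Module.Basis.injective_constr_iff {ι R V W : Type*} [CommRing R] [AddCommGroup V]
    [Module R V] [AddCommGroup W] [Module R W] (b : Basis ι R V) (s : ι → W) :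
    Function.Injective (b.constr R s) ↔ LinearIndependent R s :=
  ⟨fun h => by
    simpa [comp_def, b.constr_basis] using b.linearIndependent.map' _ (ker_eq_bot.mpr h),
    b.injective_constr_of_linearIndependent⟩

section

variable {F V W : Type*} [Field F] [AddCommGroup V] [Module F V] [AddCommGroup W] [Module F W]

theorem card_range_eq_linearMap (U : Submodule F W) :
    Nat.card {f : V →ₗ[F] W // range f = U} = Nat.card {g : V →ₗ[F] U // Surjective g} :=
  Nat.card_congr
  { toFun := fun f => ⟨f.1.codRestrict U fun v => f.2.le (mem_range_self _ v), by
      rw [← range_eq_top, range_codRestrict, f.2, Submodule.comap_subtype_self]⟩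
    invFun := fun g => ⟨U.subtype ∘ₗ g.1, by
      rw [range_comp, range_eq_top.mpr g.2, Submodule.map_top, Submodule.range_subtype]⟩
    left_inv := fun _ => rfl
    right_inv := fun _ => rfl }

theorem LinearMap.injective_iff_finrank_range_eq [FiniteDimensional F V] (f : V →ₗ[F] W) :
    Injective f ↔ finrank F (range f) = finrank F V := by
  rw [← ker_eq_bot, ← Submodule.finrank_eq_zero, ← finrank_range_add_finrank_ker f]
  omega

variable [FiniteDimensional F V] [FiniteDimensional F W]

theorem Module.Dual.transpose_bijective :
    Bijective ⇑(Dual.transpose (R := F) (M := V) (M' := W)) := by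
  have hinj : Function.Injective ⇑(Dual.transpose (R := F) (M := V) (M' := W)) := fun f g hfg =>
    (Module.dualMap_dualMap_eq_iff F V).mp (congrArg dualMap hfg)
  refine ⟨hinj, (injective_iff_surjective_of_finrank_eq_finrank (K := F) (V := V →ₗ[F] W)
    (V₂ := Dual F W →ₗ[F] Dual F V) ?_).mp hinj⟩
  simp [finrank_linearMap, Subspace.dual_finrank_eq, mul_comm]

variable [Fintype F]

local notation "q" => Fintype.card F

theorem card_injective_linearMap :
    Nat.card {f : V →ₗ[F] W // Injective f} =
      ∏ i ∈ Finset.range (finrank F V), (q ^ finrank F W - q ^ i) := by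
  have : Finite W := Module.finite_of_finite F
  rcases le_or_gt (finrank F V) (finrank F W) with h | h
  · let b := finBasis F V
    have e : {s : Fin (finrank F V) → W // LinearIndependent F s} ≃
        {f : V →ₗ[F] W // Injective f} :=
      (b.constr F).toEquiv.subtypeEquiv fun s => (b.injective_constr_iff s).symm
    rw [← Nat.card_congr e, card_linearIndependent h, Finset.prod_range]
  · have : IsEmpty {f : V →ₗ[F] W // Injective f} :=
      ⟨fun f => h.not_ge (finrank_le_finrank_of_injective f.2)⟩
    rw [Nat.card_of_isEmpty,
      Finset.prod_eq_zero (Finset.mem_range.mpr h) (Nat.sub_self (q ^ finrank F W))]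

theorem card_surjective_linearMap :
    Nat.card {f : V →ₗ[F] W // Surjective f} =
      ∏ i ∈ Finset.range (finrank F W), (q ^ finrank F V - q ^ i) := by
  have e : {f : V →ₗ[F] W // Surjective f} ≃
      {g : Dual F W →ₗ[F] Dual F V // Injective g} :=
    (Equiv.ofBijective _ Dual.transpose_bijective).subtypeEquiv
      fun _ => dualMap_injective_iff.symm
  rw [Nat.card_congr e, card_injective_linearMap,
    Subspace.dual_finrank_eq, Subspace.dual_finrank_eq]

theorem card_finrank_range_eq (r : ℕ) :
    Nat.card {f : V →ₗ[F] W // finrank F (range f) = r} =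
      Nat.card {U : Submodule F W // finrank F U = r} *
        ∏ i ∈ Finset.range r, (q ^ finrank F V - q ^ i) := by
  have : Finite W := Module.finite_of_finite F
  have : Finite (V →ₗ[F] W) := Module.finite_of_finite F
  have := Fintype.ofFinite {U : Submodule F W // finrank F U = r}
  have e : (Σ U : {U : Submodule F W // finrank F U = r}, {f : V →ₗ[F] W // range f = U}) ≃
      {f : V →ₗ[F] W // finrank F (range f) = r} :=
    Equiv.sigmaSubtypeFiberEquivSubtype range fun _ => Iff.rfl
  rw [← Nat.card_congr e, Nat.card_sigma, Nat.card_eq_fintype_card, ← smul_eq_mul,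
    ← Finset.card_univ, ← Finset.sum_const]
  refine Finset.sum_congr rfl fun U _ => ?_
  rw [card_range_eq_linearMap, card_surjective_linearMap, U.2]

theorem card_submodule_finrank_eq_mul (r : ℕ) :
    Nat.card {U : Submodule F W // finrank F U = r} * ∏ i ∈ Finset.range r, (q ^ r - q ^ i) =
      ∏ i ∈ Finset.range r, (q ^ finrank F W - q ^ i) := by
  have hr : finrank F (Fin r → F) = r := Module.finrank_fin_fun F
  have e : {f : (Fin r → F) →ₗ[F] W // Injective f} ≃
      {f : (Fin r → F) →ₗ[F] W // finrank F (range f) = r} :=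
    Equiv.subtypeEquivRight fun f => by rw [f.injective_iff_finrank_range_eq, hr]
  rw [← hr, ← card_finrank_range_eq, hr, ← Nat.card_congr e, card_injective_linearMap, hr]

theorem qBinom_eq_card_submodule (r : ℕ) :
    qBinom q (finrank F W) r = Nat.card {U : Submodule F W // finrank F U = r} := by
  have hq : 1 < q := Fintype.one_lt_card
  have hpos : 0 < ∏ i ∈ Finset.range r, (q ^ r - q ^ i) :=
    Finset.prod_pos fun i hi =>
      Nat.sub_pos_of_lt (Nat.pow_lt_pow_right hq (Finset.mem_range.mp hi))
  rw [qBinom, ← card_submodule_finrank_eq_mul, Nat.mul_div_cancel _ hpos]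

end

theorem stmt_6_general (q m n r : ℕ)
    (F : Type*) [Field F] [Fintype F] (hF : Fintype.card F = q) :
    Nat.card {f : (Fin m → F) →ₗ[F] (Fin n → F) //
        Module.finrank F (LinearMap.range f) = r} =
      qBinom q m r * qBinom q n r * ∏ i ∈ Finset.range r, (q ^ r - q ^ i) := by
  subst hF
  have hm := qBinom_eq_card_submodule (F := F) (W := Fin m → F) r
  have hn := qBinom_eq_card_submodule (F := F) (W := Fin n → F) r
  rw [Module.finrank_fin_fun] at hm hn
  rw [card_finrank_range_eq, hm, hn, ← card_submodule_finrank_eq_mul (W := Fin m → F)]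
  ring

/-- For `0 ≤ r ≤ min(m,n)`, the number of rank `r` linear maps `F_q^m → F_q^n` is
`[m choose r]_q · [n choose r]_q · ∏_{i<r} (q^r - q^i)`. -/
theorem stmt_6 (q m n r : ℕ) (hq : IsPrimePow q)
    (F : Type*) [Field F] [Fintype F] (hF : Fintype.card F = q)
    (hr : r ≤ min m n) :
    Nat.card {f : (Fin m → F) →ₗ[F] (Fin n → F) //
        Module.finrank F (LinearMap.range f) = r} =
      qBinom q m r * qBinom q n r * ∏ i ∈ Finset.range r, (q ^ r - q ^ i) :=
  stmt_6_general q m n r F hF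
end

section
/- The probability that a uniformly random pair (f, g) of linear maps f : F_q^m → F_q^n, g : F_q^n → F_q^m satisfies that g∘f is nilpotent equals q^{−m} + q^{−n} − q^{−m−n}; equivalently, the number of nilpotent pairs divided by q^{2mn} equals (q^m + q^n − 1)/q^{m+n}. -/
/-!
Fix `f : V → W` with range `R`, and write `f = ι ∘ π` with `π : V ↠ R` and `ι : R ↪ W`. Then
`g ∘ f` is nilpotent iff `π ∘ g ∘ ι ∈ End R` is, and `g ↦ π ∘ g ∘ ι` is a surjective linear map,
so all its fibres have the same size. By the Fine–Herstein theorem, `End R` has `|End R| / |R|`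
nilpotent elements, so there are `|Hom(W, V)| / |R| = |Hom(W, V)| |ker f| / |V|` such `g`.
Summing over `f`, `∑ |ker f|` counts the pairs `(f, v)` with `f v = 0`; for `v ≠ 0` evaluation at
`v` is onto `W`, so this is `|Hom(V, W)| (1 + (|V| - 1) / |W|)`.

Fine–Herstein follows from the Fitting decomposition: an endomorphism of `V` is the same as a
complementary pair `(U, W)`, a nilpotent endomorphism of `U` and an automorphism of `W`. There are
`|GL_{k+l}| / (|GL_k| |GL_l|)` complementary pairs of dimensions `(k, l)`, so the numbers `ν_k` of
nilpotent `k × k` matrices satisfy `q^(d²) / |GL_d| = ∑_{k ≤ d} ν_k / |GL_k|`; subtracting this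
identity for `d - 1` gives `ν_d = q^(d² - d)`.
-/

open Function Module LinearMap

theorem IsCompl.eq_of_le_of_le {α : Type*} [Lattice α] [BoundedOrder α] [IsModularLattice α]
    {a b a' b' : α} (h : IsCompl a b) (h' : IsCompl a' b') (ha : a ≤ a') (hb : b ≤ b') :
    a = a' := by
  refine le_antisymm ha ?_
  calc a' = (a ⊔ b) ⊓ a' := by rw [h.sup_eq_top, top_inf_eq]
    _ = a ⊔ b ⊓ a' := sup_inf_assoc_of_le b ha
    _ ≤ a ⊔ b' ⊓ a' := by gcongr
    _ = a := by rw [h'.symm.inf_eq_bot, sup_bot_eq]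

namespace AddMonoidHom

variable {A B : Type*} [AddGroup A] [AddGroup B] [Finite A]

theorem card_preimage_of_surjective (L : A →+ B) (hL : Surjective L) (P : B → Prop) :
    Nat.card {a // P (L a)} = Nat.card {b // P b} * Nat.card L.ker := by
  have : Finite B := Finite.of_surjective L hL
  have : Fintype {b // P b} := Fintype.ofFinite _
  rw [← Nat.card_congr (Equiv.sigmaSubtypeFiberEquivSubtype L fun _ ↦ Iff.rfl), Nat.card_sigma,
    Finset.sum_congr rfl fun b _ ↦ Nat.card_congr (L.fiberEquivKerOfSurjective hL b.1),
    Finset.sum_const, smul_eq_mul, Finset.card_univ, Nat.card_eq_fintype_card (α := {b // P b})]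

theorem card_preimage_mul_card (L : A →+ B) (hL : Surjective L) (P : B → Prop) :
    Nat.card {a // P (L a)} * Nat.card B = Nat.card {b // P b} * Nat.card A := by
  have hA := L.card_preimage_of_surjective hL fun _ ↦ True
  simp only [Nat.card_congr (Equiv.subtypeUnivEquiv fun _ ↦ trivial)] at hA
  rw [hA, L.card_preimage_of_surjective hL P]
  ring

end AddMonoidHom

instance {R M N : Type*} [Semiring R] [AddCommMonoid M] [AddCommMonoid N] [Module R M]
    [Module R N] [Finite M] [Finite N] : Finite (M →ₗ[R] N) :=
  DFunLike.finite _

theorem LinearMap.comp_pow_succ {R M N : Type*} [Semiring R] [AddCommMonoid M]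
    [AddCommMonoid N] [Module R M] [Module R N] (f : M →ₗ[R] N) (g : N →ₗ[R] M) (j : ℕ) :
    (f ∘ₗ g) ^ (j + 1) = f ∘ₗ ((g ∘ₗ f) ^ j) ∘ₗ g := by
  induction j with
  | zero => rfl
  | succ j ih => rw [pow_succ, ih, pow_succ]; rfl

theorem LinearMap.isNilpotent_comp_comm {R M N : Type*} [Semiring R] [AddCommMonoid M]
    [AddCommMonoid N] [Module R M] [Module R N] (f : M →ₗ[R] N) (g : N →ₗ[R] M) :
    IsNilpotent (g ∘ₗ f) ↔ IsNilpotent (f ∘ₗ g) := by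
  constructor
  · rintro ⟨k, hk⟩
    exact ⟨k + 1, by rw [comp_pow_succ, hk, zero_comp, comp_zero]⟩
  · rintro ⟨k, hk⟩
    exact ⟨k + 1, by rw [comp_pow_succ, hk, zero_comp, comp_zero]⟩

theorem card_isNilpotent_congr {K V V' : Type*} [Field K] [AddCommGroup V] [Module K V]
    [AddCommGroup V'] [Module K V'] (e : V ≃ₗ[K] V') :
    Nat.card {φ : End K V // IsNilpotent φ} = Nat.card {φ : End K V' // IsNilpotent φ} :=
  Nat.card_congr <| e.conjRingEquiv.toEquiv.subtypeEquiv fun _ ↦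
    (IsNilpotent.map_iff e.conjRingEquiv.injective).symm

section Field

variable {K V V' W W' : Type*} [Field K] [AddCommGroup V] [Module K V] [AddCommGroup V']
  [Module K V'] [AddCommGroup W] [Module K W] [AddCommGroup W'] [Module K W']

theorem LinearMap.surjective_comp_comp {π : V →ₗ[K] V'} (hπ : Surjective π) {ι : W' →ₗ[K] W}
    (hι : Injective ι) : Surjective fun g : W →ₗ[K] V ↦ π ∘ₗ g ∘ₗ ι := by
  obtain ⟨s, hs⟩ := π.exists_rightInverse_of_surjective (range_eq_top.2 hπ)
  obtain ⟨r, hr⟩ := ι.exists_leftInverse_of_injective (ker_eq_bot.2 hι)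
  intro h
  refine ⟨s ∘ₗ h ∘ₗ r, ?_⟩
  simp only [← comp_assoc, hs, id_comp]
  simp only [comp_assoc, hr, comp_id]

theorem LinearMap.card_comp_comp_mul_card [Finite V] [Finite W] {π : V →ₗ[K] V'}
    (hπ : Surjective π) {ι : W' →ₗ[K] W} (hι : Injective ι) (P : (W' →ₗ[K] V') → Prop) :
    Nat.card {g : W →ₗ[K] V // P (π ∘ₗ g ∘ₗ ι)} * Nat.card (W' →ₗ[K] V') =
      Nat.card {h // P h} * Nat.card (W →ₗ[K] V) :=
  (AddMonoidHom.mk' (fun g : W →ₗ[K] V ↦ π ∘ₗ g ∘ₗ ι) fun _ _ ↦ by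
    rw [add_comp, comp_add]).card_preimage_mul_card (surjective_comp_comp hπ hι) P

theorem Submodule.card_isCompl_mul_card_end [Finite V] (U : Submodule K V) :
    Nat.card {W // IsCompl U W} * Nat.card (End K U) = Nat.card (V →ₗ[K] U) := by
  have key := card_comp_comp_mul_card (π := LinearMap.id) surjective_id U.injective_subtype
    (· = LinearMap.id)
  rw [Nat.card_unique (α := {h : End K U // h = LinearMap.id}), one_mul] at key
  rw [← key, Nat.card_congr (U.isComplEquivProj.trans (Equiv.subtypeEquivRight fun f ↦ ?_))]
  simp [LinearMap.ext_iff]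

theorem card_apply_eq_zero_mul_card [Finite V] [Finite W] {v : V} (hv : v ≠ 0) :
    Nat.card {f : V →ₗ[K] W // f v = 0} * Nat.card W = Nat.card (V →ₗ[K] W) := by
  have key := card_comp_comp_mul_card (π := (LinearMap.id : W →ₗ[K] W)) (W := V) surjective_id
    (ι := toSpanSingleton K V v) (fun _ _ h ↦ smul_left_injective K hv (by simpa using h)) (· = 0)
  rw [Nat.card_unique (α := {h : K →ₗ[K] W // h = 0}), one_mul,
    Nat.card_congr (LinearMap.ringLmapEquivSelf K K W).toEquiv] at key
  rw [← key, Nat.card_congr (Equiv.subtypeEquivRight fun f ↦ ?_)]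
  simp [LinearMap.ext_ring_iff]

theorem card_apply_eq_zero_prod_mul_card [Finite V] [Finite W] :
    Nat.card {p : (V →ₗ[K] W) × V // p.1 p.2 = 0} * Nat.card W =
      Nat.card (V →ₗ[K] W) * (Nat.card V + Nat.card W - 1) := by
  classical
  have : Fintype V := Fintype.ofFinite V
  have e : {p : (V →ₗ[K] W) × V // p.1 p.2 = 0} ≃ Σ v : V, {f : V →ₗ[K] W // f v = 0} :=
    ((Equiv.prodComm _ _).subtypeEquiv fun _ ↦ Iff.rfl).trans
      (Equiv.subtypeProdEquivSigmaSubtype fun v (f : V →ₗ[K] W) ↦ f v = 0)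
  have hzero : Nat.card {f : V →ₗ[K] W // f 0 = 0} = Nat.card (V →ₗ[K] W) :=
    Nat.card_congr (Equiv.subtypeUnivEquiv fun f ↦ map_zero f)
  rw [Nat.card_congr e, Nat.card_sigma, Finset.sum_mul,
    ← Finset.add_sum_erase _ _ (Finset.mem_univ 0),
    Finset.sum_congr rfl fun v hv ↦ card_apply_eq_zero_mul_card (Finset.ne_of_mem_erase hv),
    Finset.sum_const, Finset.card_erase_of_mem (Finset.mem_univ 0), Finset.card_univ, hzero,
    smul_eq_mul, Nat.card_eq_fintype_card (α := V)]
  obtain ⟨n, hn⟩ := Nat.exists_eq_succ_of_ne_zero (Fintype.card_ne_zero (α := V))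
  rw [hn, Nat.succ_add_sub_one, Nat.succ_sub_one]
  ring

end Field

namespace Module.End

variable {K V : Type*} [Field K] [AddCommGroup V] [Module K V] {U W : Submodule K V}

theorem coe_pow_restrict_apply (φ : End K V) {p : Submodule K V} (h : ∀ x ∈ p, φ x ∈ p) (n : ℕ)
    (x : p) : ((φ.restrict h ^ n) x : V) = (φ ^ n) x := by
  rw [pow_restrict, coe_restrict_apply]

theorem mapsTo_ofIsCompl_left (hUW : IsCompl U W) (a : End K U) (b : End K W) :
    ∀ x ∈ U, ofIsCompl hUW (U.subtype ∘ₗ a) (W.subtype ∘ₗ b) x ∈ U := fun x hx ↦ by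
  rw [show x = ((⟨x, hx⟩ : U) : V) from rfl, ofIsCompl_apply_left]
  exact (a _).2

theorem mapsTo_ofIsCompl_right (hUW : IsCompl U W) (a : End K U) (b : End K W) :
    ∀ x ∈ W, ofIsCompl hUW (U.subtype ∘ₗ a) (W.subtype ∘ₗ b) x ∈ W := fun x hx ↦ by
  rw [show x = ((⟨x, hx⟩ : W) : V) from rfl, ofIsCompl_apply_right]
  exact (b _).2

theorem restrict_ofIsCompl_left (hUW : IsCompl U W) (a : End K U) (b : End K W) :
    (ofIsCompl hUW (U.subtype ∘ₗ a) (W.subtype ∘ₗ b)).restrict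
      (mapsTo_ofIsCompl_left hUW a b) = a := by
  ext; simp

theorem restrict_ofIsCompl_right (hUW : IsCompl U W) (a : End K U) (b : End K W) :
    (ofIsCompl hUW (U.subtype ∘ₗ a) (W.subtype ∘ₗ b)).restrict
      (mapsTo_ofIsCompl_right hUW a b) = b := by
  ext; simp

variable [FiniteDimensional K V]

def fittingKer (φ : End K V) : Submodule K V := ⨆ n, ker (φ ^ n)

def fittingRange (φ : End K V) : Submodule K V := ⨅ n, range (φ ^ n)

section

variable (φ : End K V)

theorem isCompl_fittingKer_fittingRange : IsCompl φ.fittingKer φ.fittingRange :=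
  isCompl_iSup_ker_pow_iInf_range_pow φ

theorem exists_fittingKer_eq_ker_pow :
    ∃ N, φ.fittingKer = ker (φ ^ N) ∧ φ.fittingRange = range (φ ^ N) :=
  (φ.eventually_iSup_ker_pow_eq.and φ.eventually_iInf_range_pow_eq).exists

theorem mapsTo_fittingKer : ∀ x ∈ φ.fittingKer, φ x ∈ φ.fittingKer := by
  obtain ⟨N, hN, -⟩ := φ.exists_fittingKer_eq_ker_pow
  intro x hx
  rw [hN, mem_ker] at hx ⊢
  rw [← mul_apply, ← pow_succ, pow_succ', mul_apply, hx, map_zero]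

theorem mapsTo_fittingRange : ∀ x ∈ φ.fittingRange, φ x ∈ φ.fittingRange := by
  obtain ⟨N, -, hN⟩ := φ.exists_fittingKer_eq_ker_pow
  rw [hN]
  rintro - ⟨y, rfl⟩
  exact ⟨φ y, by rw [← mul_apply, ← pow_succ, pow_succ', mul_apply]⟩

theorem isNilpotent_restrict_fittingKer : IsNilpotent (φ.restrict φ.mapsTo_fittingKer) := by
  obtain ⟨N, hN, -⟩ := φ.exists_fittingKer_eq_ker_pow
  refine ⟨N, ?_⟩
  ext ⟨x, hx⟩
  rw [hN] at hx
  simpa [coe_pow_restrict_apply] using hx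

theorem bijective_restrict_fittingRange : Bijective ⇑(φ.restrict φ.mapsTo_fittingRange) := by
  suffices Function.Injective ⇑(φ.restrict φ.mapsTo_fittingRange) from
    ⟨this, injective_iff_surjective.1 this⟩
  have hker : ker φ ≤ φ.fittingKer := fun x hx ↦ Submodule.mem_iSup_of_mem 1 <| by rwa [pow_one]
  rw [injective_restrict_iff]
  exact φ.isCompl_fittingKer_fittingRange.disjoint.symm.mono_right hker

theorem fitting_eq_of_isCompl {U W : Submodule K V} (hUW : IsCompl U W) (hU : ∀ x ∈ U, φ x ∈ U)
    (hW : ∀ x ∈ W, φ x ∈ W) (hnil : IsNilpotent (φ.restrict hU))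
    (hsurj : Surjective (φ.restrict hW)) : φ.fittingKer = U ∧ φ.fittingRange = W := by
  have hUle : U ≤ φ.fittingKer := by
    obtain ⟨N, hN⟩ := hnil
    intro x hx
    refine Submodule.mem_iSup_of_mem N ?_
    simpa [coe_pow_restrict_apply] using congr(($hN ⟨x, hx⟩ : V))
  have hWle : W ≤ φ.fittingRange := by
    refine le_iInf fun n x hx ↦ ?_
    obtain ⟨y, hy⟩ := (coe_pow (φ.restrict hW) n ▸ hsurj.iterate n) ⟨x, hx⟩
    exact ⟨y, by simpa [coe_pow_restrict_apply] using congr(($hy : V))⟩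
  have hc := φ.isCompl_fittingKer_fittingRange
  exact ⟨(hUW.eq_of_le_of_le hc hUle hWle).symm, (hUW.symm.eq_of_le_of_le hc.symm hWle hUle).symm⟩

end

noncomputable def fittingEquiv (hUW : IsCompl U W) :
    {φ : End K V // φ.fittingKer = U ∧ φ.fittingRange = W} ≃
      {a : End K U // IsNilpotent a} × (W ≃ₗ[K] W) where
  toFun φ :=
    have hU : ∀ x ∈ U, φ.1 x ∈ U := by obtain ⟨φ, rfl, -⟩ := φ; exact φ.mapsTo_fittingKer
    have hW : ∀ x ∈ W, φ.1 x ∈ W := by obtain ⟨φ, -, rfl⟩ := φ; exact φ.mapsTo_fittingRange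
    (⟨φ.1.restrict hU, by obtain ⟨φ, rfl, rfl⟩ := φ; exact φ.isNilpotent_restrict_fittingKer⟩,
      .ofBijective (φ.1.restrict hW) (by
        obtain ⟨φ, rfl, rfl⟩ := φ; exact φ.bijective_restrict_fittingRange))
  invFun ab :=
    ⟨ofIsCompl hUW (U.subtype ∘ₗ ab.1.1) (W.subtype ∘ₗ ab.2.toLinearMap),
      fitting_eq_of_isCompl _ hUW (mapsTo_ofIsCompl_left hUW _ _)
        (mapsTo_ofIsCompl_right hUW _ _)
        (by rw [restrict_ofIsCompl_left]; exact ab.1.2)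
        (by rw [restrict_ofIsCompl_right]; exact ab.2.surjective)⟩
  left_inv φ := Subtype.ext <| ofIsCompl_eq hUW (fun _ ↦ rfl) (fun _ ↦ rfl)
  right_inv ab := Prod.ext (Subtype.ext <| by ext; simp) (by ext; simp)

end Module.End

def glCard (q k : ℕ) : ℕ := ∏ i : Fin k, (q ^ k - q ^ (i : ℕ))

theorem prod_pow_sub_pow_mul_glCard (q k l : ℕ) :
    (∏ i : Fin k, (q ^ (k + l) - q ^ (i : ℕ))) * (q ^ (k * l) * glCard q l) =
      glCard q (k + l) := by
  have hshift : q ^ (k * l) * glCard q l = ∏ j : Fin l, (q ^ (k + l) - q ^ (k + (j : ℕ))) := by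
    simp_rw [pow_add, ← Nat.mul_sub, Finset.prod_mul_distrib, Finset.prod_const,
      Finset.card_univ, Fintype.card_fin, pow_mul, glCard]
  rw [hshift, glCard, Fin.prod_univ_add]
  simp

theorem glCard_succ (q e : ℕ) : glCard q (e + 1) = (q ^ (e + 1) - 1) * q ^ e * glCard q e := by
  rw [add_comm e, ← prod_pow_sub_pow_mul_glCard q 1 e]
  simp [mul_assoc]

section FiniteField

variable {F V W : Type*} [Field F] [Fintype F] [AddCommGroup V] [Module F V] [Finite V]
  [AddCommGroup W] [Module F W] [Finite W]

local notation "q" => Fintype.card F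

theorem glCard_pos (k : ℕ) : 0 < glCard q k :=
  Finset.prod_pos fun i _ ↦ Nat.sub_pos_of_lt <| Nat.pow_lt_pow_right Fintype.one_lt_card i.2

theorem card_linearMap : Nat.card (V →ₗ[F] W) = q ^ (finrank F V * finrank F W) := by
  rw [Module.natCard_eq_pow_finrank (K := F), finrank_linearMap, Nat.card_eq_fintype_card]

theorem card_linearEquiv_self : Nat.card (V ≃ₗ[F] V) = glCard q (finrank F V) := by
  rw [← Nat.card_congr ((Matrix.GeneralLinearGroup.toLin' (Module.finBasis F V)).trans
    (LinearMap.GeneralLinearGroup.generalLinearEquiv F V)).toEquiv, Matrix.card_GL_field, glCard]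

theorem card_linearIndependent_subtype_mem {k : ℕ} (U : Submodule F V) (hU : finrank F U = k) :
    Nat.card {s : Fin k → V // LinearIndependent F s ∧ ∀ i, s i ∈ U} = glCard q k := by
  have e : {s : Fin k → V // LinearIndependent F s ∧ ∀ i, s i ∈ U} ≃
      {t : Fin k → U // LinearIndependent F t} :=
    (Equiv.subtypeEquivRight fun _ ↦ and_comm).trans <|
      (Equiv.subtypeSubtypeEquivSubtypeInter _ _).symm.trans <|
        Equiv.subtypePiEquivPi.subtypeEquiv fun s ↦
          by rw [← U.subtype.linearIndependent_iff U.ker_subtype]; rfl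
  rw [Nat.card_congr e, card_linearIndependent hU.ge, hU, glCard]

theorem card_finrank_eq_mul_glCard {k : ℕ} (hk : k ≤ finrank F V) :
    Nat.card {U : Submodule F V // finrank F U = k} * glCard q k =
      ∏ i : Fin k, (q ^ finrank F V - q ^ (i : ℕ)) := by
  have : Fintype {U : Submodule F V // finrank F U = k} := Fintype.ofFinite _
  let span' (s : {s : Fin k → V // LinearIndependent F s}) :
      {U : Submodule F V // finrank F U = k} :=
    ⟨Submodule.span F (Set.range s.1), by rw [finrank_span_eq_card s.2, Fintype.card_fin]⟩
  have hfib (U : {U : Submodule F V // finrank F U = k}) :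
      Nat.card {s // span' s = U} = glCard q k := by
    rw [← card_linearIndependent_subtype_mem U.1 U.2,
      ← Nat.card_congr (Equiv.subtypeSubtypeEquivSubtypeInter _ _)]
    refine Nat.card_congr (Equiv.subtypeEquivRight fun s ↦ ?_)
    refine ⟨fun h i ↦ h ▸ Submodule.subset_span (Set.mem_range_self i), fun h ↦ Subtype.ext ?_⟩
    exact Submodule.eq_of_le_of_finrank_eq (Submodule.span_le.2 (Set.range_subset_iff.2 h))
      ((span' s).2.trans U.2.symm)
  rw [← card_linearIndependent hk, ← Nat.card_congr (Equiv.sigmaFiberEquiv span'), Nat.card_sigma,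
    Finset.sum_congr rfl fun U _ ↦ hfib U, Finset.sum_const, Finset.card_univ, smul_eq_mul,
    Nat.card_eq_fintype_card]

theorem card_isCompl_finrank_mul {k l : ℕ} (hkl : k + l = finrank F V) :
    Nat.card {p : {p : Submodule F V × Submodule F V // IsCompl p.1 p.2} // finrank F p.1.1 = k} *
      glCard q k * glCard q l = glCard q (k + l) := by
  have : Fintype {U : Submodule F V // finrank F U = k} := Fintype.ofFinite _
  have hcompl (U : {U : Submodule F V // finrank F U = k}) :
      Nat.card {W // IsCompl U.1 W} = q ^ (k * l) := by
    have h := U.1.card_isCompl_mul_card_end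
    rw [card_linearMap, card_linearMap, U.2, ← hkl] at h
    refine Nat.eq_of_mul_eq_mul_right (pow_pos Fintype.card_pos (k * k)) (h.trans ?_)
    ring
  have e : {p : {p : Submodule F V × Submodule F V // IsCompl p.1 p.2} // finrank F p.1.1 = k} ≃
      Σ U : {U : Submodule F V // finrank F U = k}, {W // IsCompl U.1 W} :=
    { toFun p := ⟨⟨p.1.1.1, p.2⟩, ⟨p.1.1.2, p.1.2⟩⟩
      invFun p := ⟨⟨(p.1.1, p.2.1), p.2.2⟩, p.1.2⟩
      left_inv _ := rfl
      right_inv _ := rfl }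
  rw [Nat.card_congr e, Nat.card_sigma, Finset.sum_congr rfl fun U _ ↦ hcompl U, Finset.sum_const,
    Finset.card_univ, smul_eq_mul, ← Nat.card_eq_fintype_card, mul_right_comm _ _ (glCard q k),
    card_finrank_eq_mul_glCard (hkl ▸ Nat.le_add_right k l), mul_assoc, ← hkl,
    prod_pow_sub_pow_mul_glCard]

theorem card_end_eq_sum_finrank :
    Nat.card (End F V) = ∑ k ∈ Finset.range (finrank F V + 1),
      Nat.card {p : {p : Submodule F V × Submodule F V // IsCompl p.1 p.2} // finrank F p.1.1 = k} *
        (Nat.card {φ : End F (Fin k → F) // IsNilpotent φ} * glCard q (finrank F V - k)) := by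
  have : Fintype {p : Submodule F V × Submodule F V // IsCompl p.1 p.2} := Fintype.ofFinite _
  let fitting (φ : End F V) : {p : Submodule F V × Submodule F V // IsCompl p.1 p.2} :=
    ⟨(φ.fittingKer, φ.fittingRange), φ.isCompl_fittingKer_fittingRange⟩
  have hfib (p : {p : Submodule F V × Submodule F V // IsCompl p.1 p.2}) :
      Nat.card {φ // fitting φ = p} = Nat.card {φ : End F (Fin (finrank F p.1.1) → F) //
        IsNilpotent φ} * glCard q (finrank F V - finrank F p.1.1) := by
    have hiff (φ : End F V) : fitting φ = p ↔ φ.fittingKer = p.1.1 ∧ φ.fittingRange = p.1.2 := by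
      simp [fitting, Subtype.ext_iff, Prod.ext_iff]
    rw [Nat.card_congr ((Equiv.subtypeEquivRight hiff).trans (End.fittingEquiv p.2)),
      Nat.card_prod, card_isNilpotent_congr (Module.finBasis F p.1.1).equivFun,
      card_linearEquiv_self, ← Submodule.finrank_add_eq_of_isCompl p.2, Nat.add_sub_cancel_left]
  rw [← Nat.card_congr (Equiv.sigmaFiberEquiv fitting), Nat.card_sigma,
    Finset.sum_congr rfl fun p _ ↦ hfib p,
    ← Finset.sum_fiberwise_of_maps_to (g := fun p ↦ finrank F p.1.1)
      (t := Finset.range (finrank F V + 1))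
      fun p _ ↦ Finset.mem_range_succ_iff.2 (Submodule.finrank_le p.1.1)]
  refine Finset.sum_congr rfl fun k _ ↦ ?_
  rw [Finset.sum_congr rfl fun p hp ↦ by rw [(Finset.mem_filter.1 hp).2], Finset.sum_const,
    smul_eq_mul, ← Fintype.card_subtype, ← Nat.card_eq_fintype_card]

theorem sum_card_isNilpotent_div_glCard (d : ℕ) :
    ∑ k ∈ Finset.range (d + 1), (Nat.card {φ : End F (Fin k → F) // IsNilpotent φ} : ℚ) /
      glCard q k = (q : ℚ) ^ (d * d) / glCard q d := by
  have hd : finrank F (Fin d → F) = d := finrank_fin_fun F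
  have hcount := card_end_eq_sum_finrank (F := F) (V := Fin d → F)
  rw [card_linearMap, hd] at hcount
  have hcountQ := congr(($hcount : ℚ))
  push_cast at hcountQ
  have hγ (k : ℕ) : (glCard q k : ℚ) ≠ 0 := Nat.cast_ne_zero.2 (glCard_pos k).ne'
  rw [eq_div_iff (hγ d), Finset.sum_mul, hcountQ]
  refine Finset.sum_congr rfl fun k hk ↦ ?_
  have hk : k + (d - k) = finrank F (Fin d → F) := by
    rw [hd]; exact Nat.add_sub_of_le (Finset.mem_range_succ_iff.1 hk)
  have hpairs := card_isCompl_finrank_mul hk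
  rw [hk, hd] at hpairs
  rw [← hpairs]
  push_cast
  field_simp [hγ k]

theorem card_isNilpotent_fin_mul (d : ℕ) :
    Nat.card {φ : End F (Fin d → F) // IsNilpotent φ} * q ^ d = q ^ (d * d) := by
  rcases d with _ | e
  · simp
  have hγ (k : ℕ) : (glCard q k : ℚ) ≠ 0 := Nat.cast_ne_zero.2 (glCard_pos k).ne'
  have hq1 : (q : ℚ) ^ (e + 1) - 1 ≠ 0 :=
    sub_ne_zero.2 (one_lt_pow₀ (by exact_mod_cast Fintype.one_lt_card) e.succ_ne_zero).ne'
  have hq0 : (q : ℚ) ≠ 0 := by positivity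
  have hsub : ((q ^ (e + 1) - 1 : ℕ) : ℚ) = (q : ℚ) ^ (e + 1) - 1 := by
    rw [Nat.cast_sub (Nat.one_le_pow _ _ Fintype.card_pos)]; push_cast; ring
  have h := sum_card_isNilpotent_div_glCard (F := F) (e + 1)
  rw [Finset.sum_range_succ, sum_card_isNilpotent_div_glCard e, glCard_succ] at h
  push_cast [hsub] at h
  field_simp [hγ e] at h
  suffices (Nat.card {φ : End F (Fin (e + 1) → F) // IsNilpotent φ} : ℚ) * (q : ℚ) ^ (e + 1) =
      (q : ℚ) ^ ((e + 1) * (e + 1)) by exact_mod_cast this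
  linear_combination (q : ℚ) ^ (e + 1) * h

theorem card_isNilpotent_mul_card :
    Nat.card {φ : End F V // IsNilpotent φ} * Nat.card V = Nat.card (End F V) := by
  rw [card_isNilpotent_congr (Module.finBasis F V).equivFun, card_linearMap,
    Module.natCard_eq_pow_finrank (K := F) (V := V), Nat.card_eq_fintype_card (α := F),
    card_isNilpotent_fin_mul]

theorem card_comp_isNilpotent_mul_card_range (f : V →ₗ[F] W) :
    Nat.card {g : W →ₗ[F] V // IsNilpotent (g ∘ₗ f)} * Nat.card (range f) =
      Nat.card (W →ₗ[F] V) := by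
  have hswap (g : W →ₗ[F] V) :
      IsNilpotent (g ∘ₗ f) ↔ IsNilpotent (f.rangeRestrict ∘ₗ g ∘ₗ (range f).subtype) := by
    rw [show g ∘ₗ f = (g ∘ₗ (range f).subtype) ∘ₗ f.rangeRestrict by ext; simp,
      isNilpotent_comp_comm]
  have key := card_comp_comp_mul_card f.surjective_rangeRestrict (range f).injective_subtype
    IsNilpotent
  rw [← card_isNilpotent_mul_card, Nat.card_congr (Equiv.subtypeEquivRight hswap).symm] at key
  have : Nonempty {φ : End F (range f) // IsNilpotent φ} := ⟨⟨0, .zero⟩⟩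
  exact Nat.eq_of_mul_eq_mul_left Nat.card_pos (by rw [← key]; ring)

theorem card_isNilpotent_comp_mul_card :
    Nat.card {p : (V →ₗ[F] W) × (W →ₗ[F] V) // IsNilpotent (p.2 ∘ₗ p.1)} * Nat.card V *
      Nat.card W =
        Nat.card (V →ₗ[F] W) * Nat.card (W →ₗ[F] V) * (Nat.card V + Nat.card W - 1) := by
  have : Fintype (V →ₗ[F] W) := Fintype.ofFinite _
  have hfiber (f : V →ₗ[F] W) :
      Nat.card {g : W →ₗ[F] V // IsNilpotent (g ∘ₗ f)} * Nat.card V =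
        Nat.card (W →ₗ[F] V) * Nat.card (ker f) := by
    rw [(ker f).card_eq_card_quotient_mul_card, Nat.card_congr f.quotKerEquivRange.toEquiv,
      ← card_comp_isNilpotent_mul_card_range f]
    ring
  have hker : ∑ f : V →ₗ[F] W, Nat.card (ker f) =
      Nat.card {p : (V →ₗ[F] W) × V // p.1 p.2 = 0} := by
    rw [Nat.card_congr (Equiv.subtypeProdEquivSigmaSubtype fun (f : V →ₗ[F] W) v ↦ f v = 0),
      Nat.card_sigma]
    rfl
  rw [Nat.card_congr (Equiv.subtypeProdEquivSigmaSubtype fun (f : V →ₗ[F] W) g ↦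
      IsNilpotent (g ∘ₗ f)), Nat.card_sigma, Finset.sum_mul,
    Finset.sum_congr rfl fun f _ ↦ hfiber f, ← Finset.mul_sum, hker, mul_assoc,
    card_apply_eq_zero_prod_mul_card]
  ring

end FiniteField

theorem stmt_11_general (q m n : ℕ)
    (F : Type*) [Field F] [Fintype F] (hF : Fintype.card F = q) :
    (Nat.card {p : ((Fin m → F) →ₗ[F] (Fin n → F)) × ((Fin n → F) →ₗ[F] (Fin m → F)) //
        IsNilpotent (p.2 ∘ₗ p.1)} : ℚ) / (q : ℚ) ^ (2 * m * n) =
      ((q : ℚ) ^ m + (q : ℚ) ^ n - 1) / (q : ℚ) ^ (m + n) ∧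
    ((q : ℚ) ^ m + (q : ℚ) ^ n - 1) / (q : ℚ) ^ (m + n) =
      (q : ℚ) ^ (-(m : ℤ)) + (q : ℚ) ^ (-(n : ℤ)) + -(q : ℚ) ^ (-(m : ℤ) - n) := by
  have hcount := card_isNilpotent_comp_mul_card (F := F) (V := Fin m → F) (W := Fin n → F)
  simp only [card_linearMap, finrank_fin_fun, Nat.card_eq_fintype_card, Fintype.card_pi,
    Finset.prod_const, Finset.card_univ, Fintype.card_fin, hF] at hcount
  have hq : 0 < q := hF ▸ Fintype.card_pos
  have hsub : ((q ^ m + q ^ n - 1 : ℕ) : ℚ) = (q : ℚ) ^ m + (q : ℚ) ^ n - 1 := by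
    rw [Nat.cast_sub (le_add_right (Nat.one_le_pow _ _ hq))]
    push_cast; rfl
  refine ⟨?_, ?_⟩
  · rw [div_eq_div_iff (by positivity) (by positivity), ← hsub]
    have hcountQ := congr(($hcount : ℚ))
    push_cast at hcountQ
    linear_combination hcountQ
  · rw [show -(m : ℤ) - n = -((m + n : ℕ) : ℤ) by push_cast; ring]
    simp only [zpow_neg, zpow_natCast]
    field_simp
    ring

/-- The probability that a uniformly random pair `(f, g)` of linear maps
`f : F_q^m → F_q^n`, `g : F_q^n → F_q^m` has `g ∘ f` nilpotent is
`(q^m + q^n - 1)/q^(m+n)`, i.e. `q^(-m) + q^(-n) - q^(-m-n)`. -/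
theorem stmt_11 (q m n : ℕ) (hq : IsPrimePow q) (hm : 1 ≤ m) (hn : 1 ≤ n)
    (F : Type*) [Field F] [Fintype F] (hF : Fintype.card F = q) :
    (Nat.card {p : ((Fin m → F) →ₗ[F] (Fin n → F)) × ((Fin n → F) →ₗ[F] (Fin m → F)) //
        IsNilpotent (p.2 ∘ₗ p.1)} : ℚ) / (q : ℚ) ^ (2 * m * n) =
      ((q : ℚ) ^ m + (q : ℚ) ^ n - 1) / (q : ℚ) ^ (m + n) ∧
    ((q : ℚ) ^ m + (q : ℚ) ^ n - 1) / (q : ℚ) ^ (m + n) =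
      (q : ℚ) ^ (-(m : ℤ)) + (q : ℚ) ^ (-(n : ℤ)) + -(q : ℚ) ^ (-(m : ℤ) - n) :=
  stmt_11_general q m n F hF
end

section
/- Let (f,g) be a nilpotent pair and v ∈ V balanced of length ℓ. Then f restricts to an isomorphism from the span of {v, Tv, ..., T^{ℓ−1}v} onto the span of {fv, T'fv, ..., (T')^{ℓ−1}fv}. -/
/-!
Since `f ∘ (g ∘ f)ⁿ = (f ∘ g)ⁿ ∘ f`, the map `f` carries the `g ∘ f`-Krylov family of `v` onto the
`f ∘ g`-Krylov family of `f v`, hence maps the first span onto the second. The second family is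
linearly independent: applying `(f ∘ g)^(ℓ-1-j)` to a relation whose first nonzero coefficient
sits at `j` isolates that coefficient against `(f ∘ g)^(ℓ-1) (f v) ≠ 0`. So the kernel of `f` meets
the first span trivially.
-/

open Submodule

namespace LinearMap

variable {R M N : Type*} [Semiring R] [AddCommMonoid M] [AddCommMonoid N] [Module R M] [Module R N]

theorem apply_comp_pow_apply (f : M →ₗ[R] N) (g : N →ₗ[R] M) (n : ℕ) (x : M) :
    f (((g ∘ₗ f) ^ n) x) = ((f ∘ₗ g) ^ n) (f x) := by
  induction n generalizing x with
  | zero => rfl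
  | succ n ih => simp only [pow_succ', Module.End.mul_apply, comp_apply, ih]

theorem map_span_range_comp_pow_apply {ι : Type*} (f : M →ₗ[R] N) (g : N →ₗ[R] M) (e : ι → ℕ)
    (v : M) :
    (span R (Set.range fun i => ((g ∘ₗ f) ^ e i) v)).map f =
      span R (Set.range fun i => ((f ∘ₗ g) ^ e i) (f v)) := by
  rw [map_span, ← Set.range_comp]
  simp only [Function.comp_def, apply_comp_pow_apply]

end LinearMap

namespace Module.End

variable {R M : Type*} [Ring R] [AddCommGroup M] [Module R M]

theorem pow_apply_eq_zero_of_le {T : Module.End R M} {w : M} {n m : ℕ} (hw : (T ^ n) w = 0)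
    (hnm : n ≤ m) : (T ^ m) w = 0 := by
  rw [← Nat.sub_add_cancel hnm, pow_add, mul_apply, hw, map_zero]

theorem linearIndependent_pow_apply [NoZeroSMulDivisors R M] {T : Module.End R M} {w : M}
    {n : ℕ} (hne : (T ^ (n - 1)) w ≠ 0) (hzero : (T ^ n) w = 0) :
    LinearIndependent R fun i : Fin n => (T ^ (i : ℕ)) w := by
  rw [Fintype.linearIndependent_iff]
  intro c hc
  by_contra! hc_ne
  obtain ⟨j, hj, hj_min⟩ := WellFounded.has_min wellFounded_lt {i | c i ≠ 0} hc_ne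
  have hj_isolated : (T ^ (n - 1 - j)) (∑ i, c i • (T ^ (i : ℕ)) w) = c j • (T ^ (n - 1)) w := by
    rw [map_sum, Finset.sum_eq_single j]
    · rw [map_smul, ← mul_apply, ← pow_add, Nat.sub_add_cancel (by omega)]
    · intro i _ hij
      rcases hij.lt_or_gt with hlt | hgt
      · rw [not_not.mp fun h => hj_min i h hlt, zero_smul, map_zero]
      · rw [map_smul, ← mul_apply, ← pow_add,
          pow_apply_eq_zero_of_le hzero (by omega), smul_zero]
    · simp
  rw [hc, map_zero, eq_comm] at hj_isolated
  exact (eq_zero_or_eq_zero_of_smul_eq_zero hj_isolated).elim hj hne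

end Module.End

theorem stmt_14_general (k : Type*) [Field k] (V W : Type*) [AddCommGroup V] [Module k V]
    [AddCommGroup W] [Module k W]
    (f : V →ₗ[k] W) (g : W →ₗ[k] V)
    (v : V) (ℓ : ℕ)
    (h3 : ((f ∘ₗ g) ^ (ℓ - 1)) (f v) ≠ 0) (h4 : ((f ∘ₗ g) ^ ℓ) (f v) = 0) :
    ∃ h : ∀ x ∈ Submodule.span k (Set.range fun i : Fin ℓ => ((g ∘ₗ f) ^ (i : ℕ)) v),
        f x ∈ Submodule.span k (Set.range fun i : Fin ℓ => ((f ∘ₗ g) ^ (i : ℕ)) (f v)),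
      Function.Bijective (f.restrict h) := by
  have hmap := LinearMap.map_span_range_comp_pow_apply f g (fun i : Fin ℓ => (i : ℕ)) v
  have hli : LinearIndependent k (f ∘ fun i : Fin ℓ => ((g ∘ₗ f) ^ (i : ℕ)) v) := by
    simpa only [Function.comp_def, LinearMap.apply_comp_pow_apply] using
      Module.End.linearIndependent_pow_apply h3 h4
  refine ⟨fun x hx => hmap ▸ mem_map_of_mem hx, ?_, ?_⟩
  · exact (LinearMap.injective_restrict_iff _).mpr (range_ker_disjoint hli)
  · rintro ⟨y, hy⟩
    obtain ⟨x, hx, rfl⟩ := mem_map.mp (hmap ▸ hy)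
    exact ⟨⟨x, hx⟩, rfl⟩

/-- Let `(f,g)` be a nilpotent pair and `v ∈ V` balanced of length `ℓ` (that is,
`T^(ℓ-1) v ≠ 0`, `T^ℓ v = 0`, `(T')^(ℓ-1)(f v) ≠ 0`, `(T')^ℓ (f v) = 0`, where
`T = g∘f` and `T' = f∘g`).  Then `f` restricts to an isomorphism from
`span {v, Tv, …, T^(ℓ-1) v}` onto `span {f v, T' f v, …, (T')^(ℓ-1) (f v)}`. -/
theorem stmt_14 (k : Type*) [Field k] (V W : Type*) [AddCommGroup V] [Module k V]
    [AddCommGroup W] [Module k W] [FiniteDimensional k V] [FiniteDimensional k W]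
    (f : V →ₗ[k] W) (g : W →ₗ[k] V) (hnil : IsNilpotent (g ∘ₗ f))
    (v : V) (ℓ : ℕ)
    (h1 : ((g ∘ₗ f) ^ (ℓ - 1)) v ≠ 0) (h2 : ((g ∘ₗ f) ^ ℓ) v = 0)
    (h3 : ((f ∘ₗ g) ^ (ℓ - 1)) (f v) ≠ 0) (h4 : ((f ∘ₗ g) ^ ℓ) (f v) = 0) :
    ∃ h : ∀ x ∈ Submodule.span k (Set.range fun i : Fin ℓ => ((g ∘ₗ f) ^ (i : ℕ)) v),
        f x ∈ Submodule.span k (Set.range fun i : Fin ℓ => ((f ∘ₗ g) ^ (i : ℕ)) (f v)),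
      Function.Bijective (f.restrict h) :=
  stmt_14_general k V W f g v ℓ h3 h4
end

section
/- Let X, Y be finite sets with |X| = m, |Y| = n. A pair of maps f : X → Y, g : Y → X is eventually constant (meaning (g∘f)^k has image of size 1 for some k) if and only if the associated directed bipartite graph, with an edge x → f(x) for each x ∈ X and y → g(y) for each y ∈ Y, has exactly one directed cycle, which is a 2-cycle. -/
/-!
Both sides say that `g ∘ f` has exactly one periodic point. For the left side this holds on any
finite set, because every orbit of a self-map of a finite set falls into a cycle. For the right
side, `(stepMap f g)^[2]` restricts to `g ∘ f` on `X` and to `f ∘ g` on `Y`, and `f` maps the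
periodic points of `g ∘ f` onto those of `f ∘ g`.
-/

/-- The step map of the directed bipartite graph `G(f,g)` on `X ⊔ Y`, with an edge
`x → f x` for each `x ∈ X` and `y → g y` for each `y ∈ Y`. -/
def stepMap {X Y : Type*} (f : X → Y) (g : Y → X) : X ⊕ Y → X ⊕ Y
  | Sum.inl x => Sum.inr (f x)
  | Sum.inr y => Sum.inl (g y)

namespace Function

variable {α β : Type*}

theorem mem_periodicPts_iff_exists_iterate_eq {f : α → α} {x : α} :
    x ∈ periodicPts f ↔ ∃ k ≥ 1, f^[k] x = x :=
  Iff.rfl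

theorem periodicPts_iterate {f : α → α} {n : ℕ} (hn : 0 < n) :
    periodicPts f^[n] = periodicPts f := by
  ext x
  constructor
  · rintro ⟨m, hm, hx⟩
    exact mk_mem_periodicPts (Nat.mul_pos hn hm) (by rwa [IsPeriodicPt, iterate_mul])
  · rintro ⟨m, hm, hx⟩
    exact mk_mem_periodicPts hm (hx.iterate n)

theorem Semiconj.mem_periodicPts_iff {fa : α → α} {fb : β → β} {g : α → β}
    (h : Semiconj g fa fb) (hg : Injective g) {x : α} :
    g x ∈ periodicPts fb ↔ x ∈ periodicPts fa := by
  refine ⟨fun ⟨n, hn, hx⟩ ↦ ⟨n, hn, hg ?_⟩, fun hx ↦ h.mapsTo_periodicPts hx⟩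
  rw [(h.iterate_right n).eq, hx.eq]

theorem periodicPts_comp_eq_image (f : α → β) (g : β → α) :
    periodicPts (f ∘ g) = f '' periodicPts (g ∘ f) := by
  have hf : Semiconj f (g ∘ f) (f ∘ g) := fun _ ↦ rfl
  have hg : Semiconj g (f ∘ g) (g ∘ f) := fun _ ↦ rfl
  refine Set.Subset.antisymm (fun y hy ↦ ?_) hf.mapsTo_periodicPts.image_subset
  obtain ⟨y', hy', rfl⟩ := (bijOn_periodicPts (f ∘ g)).surjOn hy
  exact ⟨g y', hg.mapsTo_periodicPts hy', rfl⟩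

theorem IsFixedPt.of_periodicPts_eq_singleton {f : α → α} {c : α} (hc : periodicPts f = {c}) :
    IsFixedPt f c := by
  simpa [hc, IsFixedPt] using (bijOn_periodicPts f).mapsTo (by simp [hc] : c ∈ periodicPts f)

theorem exists_iterate_mem_periodicPts [Finite α] (f : α → α) (x : α) :
    ∃ i, f^[i] x ∈ periodicPts f := by
  obtain ⟨i, j, hne, hij⟩ := Finite.exists_ne_map_eq_of_infinite (f^[·] x)
  wlog hlt : i < j generalizing i j
  · exact this j i hne.symm hij.symm (by omega)
  refine ⟨i, mk_mem_periodicPts (Nat.sub_pos_of_lt hlt) ?_⟩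
  rw [IsPeriodicPt, IsFixedPt, ← iterate_add_apply, Nat.sub_add_cancel hlt.le]
  exact hij.symm

theorem exists_iterate_eq_const_iff_periodicPts_eq_singleton [Finite α] (f : α → α) :
    (∃ (k : ℕ) (c : α), ∀ x, f^[k] x = c) ↔ ∃ c, periodicPts f = {c} := by
  constructor
  · rintro ⟨k, c, hc⟩
    have hfix : IsFixedPt f c := by
      have := hc (f c)
      rwa [← iterate_succ_apply, iterate_succ_apply', hc] at this
    have hsub : periodicPts f ⊆ {c} := fun x hx ↦ by
      rw [← periodicPts_iterate k.succ_pos] at hx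
      obtain ⟨y, rfl⟩ := periodicPts_subset_range hx
      exact hc (f y)
    exact ⟨c, hsub.antisymm (Set.singleton_subset_iff.mpr (mk_mem_periodicPts one_pos hfix))⟩
  · rintro ⟨c, hc⟩
    have hfix := IsFixedPt.of_periodicPts_eq_singleton hc
    have reach : ∀ x, ∃ i, f^[i] x = c := fun x ↦ by
      simpa [hc] using exists_iterate_mem_periodicPts f x
    choose i hi using reach
    obtain ⟨k, hk⟩ := Finite.exists_le i
    refine ⟨k, c, fun x ↦ ?_⟩
    rw [← Nat.sub_add_cancel (hk x), iterate_add_apply, hi, iterate_fixed hfix]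

end Function

open Function

section stepMap

variable {X Y : Type*} (f : X → Y) (g : Y → X)

theorem inl_mem_periodicPts_stepMap {x : X} :
    Sum.inl x ∈ periodicPts (stepMap f g) ↔ x ∈ periodicPts (g ∘ f) := by
  rw [← periodicPts_iterate two_pos]
  exact (show Semiconj Sum.inl (g ∘ f) (stepMap f g)^[2] from fun _ ↦ rfl).mem_periodicPts_iff
    Sum.inl_injective

theorem inr_mem_periodicPts_stepMap {y : Y} :
    Sum.inr y ∈ periodicPts (stepMap f g) ↔ y ∈ periodicPts (f ∘ g) := by
  rw [← periodicPts_iterate two_pos]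
  exact (show Semiconj Sum.inr (f ∘ g) (stepMap f g)^[2] from fun _ ↦ rfl).mem_periodicPts_iff
    Sum.inr_injective

end stepMap

theorem stmt_18_general (X Y : Type*) [Finite X]
    (f : X → Y) (g : Y → X) :
    (∃ (k : ℕ) (c : X), ∀ x, (g ∘ f)^[k] x = c) ↔
    ∃ (x₀ : X) (y₀ : Y), f x₀ = y₀ ∧ g y₀ = x₀ ∧
      ∀ z : X ⊕ Y, (∃ k ≥ 1, (stepMap f g)^[k] z = z) ↔
        (z = Sum.inl x₀ ∨ z = Sum.inr y₀) := by
  rw [exists_iterate_eq_const_iff_periodicPts_eq_singleton]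
  simp only [← mem_periodicPts_iff_exists_iterate_eq]
  constructor
  · rintro ⟨c, hc⟩
    refine ⟨c, f c, rfl, IsFixedPt.of_periodicPts_eq_singleton hc, ?_⟩
    rintro (x | y)
    · simp [inl_mem_periodicPts_stepMap, hc]
    · simp [inr_mem_periodicPts_stepMap, periodicPts_comp_eq_image, hc]
  · rintro ⟨x₀, _, rfl, -, hper⟩
    refine ⟨x₀, Set.ext fun x ↦ ?_⟩
    simpa [inl_mem_periodicPts_stepMap] using hper (Sum.inl x)

/-- A pair `(f, g)` is eventually constant (some iterate of `g ∘ f` has singleton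
image) iff the associated directed bipartite graph `G(f,g)` has exactly one directed
cycle, which is a 2-cycle: there are `x₀, y₀` with `f x₀ = y₀`, `g y₀ = x₀`, and the
vertices lying on directed cycles (the periodic points of the step map) are exactly
`x₀` and `y₀`. -/
theorem stmt_18 (X Y : Type*) [Finite X] [Finite Y] [Nonempty X] [Nonempty Y]
    (f : X → Y) (g : Y → X) :
    (∃ (k : ℕ) (c : X), ∀ x, (g ∘ f)^[k] x = c) ↔
    ∃ (x₀ : X) (y₀ : Y), f x₀ = y₀ ∧ g y₀ = x₀ ∧
      ∀ z : X ⊕ Y, (∃ k ≥ 1, (stepMap f g)^[k] z = z) ↔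
        (z = Sum.inl x₀ ∨ z = Sum.inr y₀) :=
  stmt_18_general X Y f g
end
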